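/- arXiv:2007.05808 — 2 statements merged into one kernel-verified Lean document; each statement's English description precedes it below -/
import Mathlib

section
/- Let G be a connected simple graph with mixed metric dimension β_M(G), and let v be a vertex with deg(v) > 2^{β_M(G)−1} − 1. Then v is not a member of any mixed resolving set of cardinality β_M(G). -/
open SimpleGraph

/-- Distance from a vertex `w` to an edge `e` (as a `Sym2`). -/
noncomputable def edist {V : Type*} (G : SimpleGraph V) (w : V) (e : Sym2 V) : Nat :=
  Sym2.lift ⟨fun u v => min (G.dist w u) (G.dist w v), fun u v => min_comm _ _⟩ e

/-- `S` is a mixed resolving set: every two distinct elements of `V ∪ E`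
are distinguished by the distance to some vertex of `S`. -/
def MixedResolvingSet {V : Type*} (G : SimpleGraph V) (S : Set V) : Prop :=
  (∀ u v : V, u ≠ v → ∃ w ∈ S, G.dist w u ≠ G.dist w v) ∧
  (∀ e ∈ G.edgeSet, ∀ f ∈ G.edgeSet, e ≠ f → ∃ w ∈ S, edist G w e ≠ edist G w f) ∧
  (∀ u : V, ∀ e ∈ G.edgeSet, ∃ w ∈ S, G.dist w u ≠ edist G w e)

/-- The mixed metric dimension of `G`. -/
noncomputable def mixedDim {V : Type*} (G : SimpleGraph V) : Nat :=
  sInf {n | ∃ S : Set V, MixedResolvingSet G S ∧ S.ncard = n}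

/-!
For a vertex `w` and a neighbour `u` of `v`, the distance `d(w, vu)` is either `d(w, v)` or
`d(w, v) - 1`, so one bit per vertex of `S \ {v}` records the distances from `S` to the edge `vu`
(from `v` itself every such edge is at distance `0`). The edges at `v` are pairwise resolved by `S`,
so their bit vectors are distinct, and each of them is separated from the vertex `v`, whose vector
is identically `false`. Hence `deg v ≤ 2 ^ (|S| - 1) - 1`.
-/

section IncidentEdges

variable {V : Type*} (G : SimpleGraph V)

lemma edist_mk (w a b : V) : edist G w s(a, b) = min (G.dist w a) (G.dist w b) := rfl

lemma edist_self_mk_left (v u : V) : edist G v s(v, u) = 0 := by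
  simp [edist_mk]

lemma edist_mk_left_le (w v u : V) : edist G w s(v, u) ≤ G.dist w v := by
  rw [edist_mk]
  exact min_le_left _ _

lemma dist_sub_one_le_edist_of_adj (w : V) {v u : V} (h : G.Adj v u) :
    G.dist w v - 1 ≤ edist G w s(v, u) := by
  have htri : G.dist w v ≤ G.dist w u + G.dist u v := h.symm.reachable.dist_triangle_right w
  rw [dist_eq_one_iff_adj.mpr h.symm] at htri
  rw [edist_mk]
  omega

noncomputable def incidentEdgeBit (v u w : V) : Bool := decide (edist G w s(v, u) < G.dist w v)

lemma incidentEdgeBit_eq_true_of_dist_ne (w v u : V) (h : G.dist w v ≠ edist G w s(v, u)) :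
    incidentEdgeBit G v u w = true := by
  have := edist_mk_left_le G w v u
  simp only [incidentEdgeBit, decide_eq_true_eq]
  omega

lemma edist_eq_of_incidentEdgeBit_eq (w : V) {v u₁ u₂ : V} (h₁ : G.Adj v u₁) (h₂ : G.Adj v u₂)
    (h : incidentEdgeBit G v u₁ w = incidentEdgeBit G v u₂ w) :
    edist G w s(v, u₁) = edist G w s(v, u₂) := by
  have := edist_mk_left_le G w v u₁
  have := edist_mk_left_le G w v u₂
  have := dist_sub_one_le_edist_of_adj G w h₁
  have := dist_sub_one_le_edist_of_adj G w h₂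
  simp only [incidentEdgeBit, decide_eq_decide] at h
  omega

end IncidentEdges

theorem MixedResolvingSet.degree_lt_two_pow {V : Type*} [Fintype V] {G : SimpleGraph V}
    [DecidableRel G.Adj] {S : Set V} (hS : MixedResolvingSet G S) {v : V} (hv : v ∈ S) :
    G.degree v < 2 ^ (S.ncard - 1) := by
  classical
  obtain ⟨-, hedges, hvertex_edge⟩ := hS
  let code : G.neighborSet v → (↥(S \ {v}) → Bool) := fun u w => incidentEdgeBit G v u w
  have hcode_inj : Function.Injective code := by
    rintro ⟨u₁, hu₁⟩ ⟨u₂, hu₂⟩ hcode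
    by_contra hne
    have hedge_ne : s(v, u₁) ≠ s(v, u₂) := fun h => hne (Subtype.ext (Sym2.congr_right.mp h))
    obtain ⟨w, hwS, hw⟩ := hedges s(v, u₁) hu₁ s(v, u₂) hu₂ hedge_ne
    have hwv : w ≠ v := by
      rintro rfl
      simp [edist_self_mk_left] at hw
    exact hw (edist_eq_of_incidentEdgeBit_eq G w hu₁ hu₂ (congrFun hcode ⟨w, hwS, hwv⟩))
  have hcode_ne_false : (fun _ => false) ∉ Set.range code := by
    rintro ⟨⟨u, hu⟩, hcode⟩
    obtain ⟨w, hwS, hw⟩ := hvertex_edge v s(v, u) hu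
    have hwv : w ≠ v := by
      rintro rfl
      simp [edist_self_mk_left] at hw
    have hbit := congrFun hcode ⟨w, hwS, hwv⟩
    simp [code, incidentEdgeBit_eq_true_of_dist_ne G w v u hw] at hbit
  calc G.degree v = Fintype.card (G.neighborSet v) := (card_neighborSet_eq_degree G v).symm
    _ < Fintype.card (↥(S \ {v}) → Bool) :=
      Fintype.card_lt_of_injective_of_notMem code hcode_inj hcode_ne_false
    _ = 2 ^ (S.ncard - 1) := by
      rw [Fintype.card_fun, Fintype.card_bool, ← Nat.card_eq_fintype_card,
        Nat.card_coe_set_eq, Set.ncard_sdiff_singleton_of_mem hv]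

theorem stmt_1_general {V : Type*} [Fintype V] (G : SimpleGraph V) [DecidableRel G.Adj]
    (v : V) (hv : G.degree v > 2 ^ (mixedDim G - 1) - 1) :
    ∀ S : Set V, MixedResolvingSet G S → S.ncard = mixedDim G → v ∉ S := by
  intro S hS hcard hvS
  have hdeg := hS.degree_lt_two_pow hvS
  rw [hcard] at hdeg
  omega

theorem stmt_1 {V : Type*} [Fintype V] (G : SimpleGraph V) [DecidableRel G.Adj]
    (hG : G.Connected) (v : V) (hv : G.degree v > 2 ^ (mixedDim G - 1) - 1) :
    ∀ S : Set V, MixedResolvingSet G S → S.ncard = mixedDim G → v ∉ S :=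
  stmt_1_general G v hv
end

section
/- For m = 2k+1, n = 2l+1 with k,l ≥ 1, the set S = {(0,0), (0,l), (1,l+1), (k+1,l+1)} is a mixed resolving set of the torus graph T_{m,n} = C_m □ C_n; hence β_M(T_{2k+1,2l+1}) ≤ 4. -/
/-
Encode a vertex `v` as the degenerate edge `s(v, v)`. Then every element of `V ∪ E` is
`s((a, b), (a + δ₁, b + δ₂))` with `δ₁ + δ₂ ≤ 1`, and its distance from `w` is a sum of two
distances in cycles, where a cycle along which the element is an edge behaves as if it had one
vertex less. The distances from the landmarks `(0, 0)` and `(0, l)` differ by an amount depending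
only on `b`, those from `(1, l + 1)` and `(k + 1, l + 1)` by an amount depending only on `a`, and
both amounts are injective in that coordinate: this separates elements of the same kind. Elements
of different kinds are separated by comparing the remaining distances. Everything reduces to
linear arithmetic on residues.
-/

open SimpleGraph

/-- The cycle graph on `ZMod n`. -/
def cycleZ (n : Nat) : SimpleGraph (ZMod n) :=
  SimpleGraph.fromRel (fun u v => u - v = 1)

/-- The torus graph `T_{m,n} = C_m □ C_n`. -/
def torus (m n : Nat) : SimpleGraph (ZMod m × ZMod n) :=
  (cycleZ m).boxProd (cycleZ n)

/-- For `x < c`, `circDist c x` is the distance from `0` to `x` in the cycle `C_c`, and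
`circDist (c - 1) x` the distance from `0` to the edge `{x, x + 1}` of `C_c`. -/
def circDist (c x : ℕ) : ℕ := min x (c - x)

theorem SimpleGraph.Walk.le_add_length_of_le_add_one {V : Type*} {G : SimpleGraph V}
    (f : V → ℕ) (hf : ∀ a b, G.Adj a b → f a ≤ f b + 1) {u v : V} (p : G.Walk u v) :
    f u ≤ f v + p.length := by
  induction p with
  | nil => simp
  | cons h _ ih =>
    rw [Walk.length_cons]
    linarith [hf _ _ h]

theorem edist_diag {V : Type*} (G : SimpleGraph V) (w v : V) :
    edist G w (Sym2.diag v) = G.dist w v :=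
  min_self _

theorem mixedResolvingSet_of_edist_injOn {V : Type*} (G : SimpleGraph V) (S : Set V)
    (h : ∀ x ∈ Set.range Sym2.diag ∪ G.edgeSet, ∀ y ∈ Set.range Sym2.diag ∪ G.edgeSet,
      (∀ w ∈ S, edist G w x = edist G w y) → x = y) :
    MixedResolvingSet G S := by
  refine ⟨fun u v huv => ?_, fun e he f hf hef => ?_, fun u e he => ?_⟩
  · by_contra! hd
    exact huv (Sym2.diag_injective (h _ (.inl ⟨u, rfl⟩) _ (.inl ⟨v, rfl⟩)
      fun w hw => by rw [edist_diag, edist_diag, hd w hw]))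
  · by_contra! hd
    exact hef (h _ (.inr he) _ (.inr hf) hd)
  · by_contra! hd
    have := h _ (.inl ⟨u, rfl⟩) _ (.inr he) fun w hw => by rw [edist_diag, hd w hw]
    exact G.not_isDiag_of_mem_edgeSet he (this ▸ Sym2.diag_isDiag u)

theorem mixedDim_le_ncard {V : Type*} {G : SimpleGraph V} {S : Set V}
    (h : MixedResolvingSet G S) : mixedDim G ≤ S.ncard :=
  Nat.sInf_le ⟨S, h, rfl⟩

theorem ZMod.val_add_eq_or {m : ℕ} [NeZero m] (a b : ZMod m) :
    (a + b).val = a.val + b.val ∨ (a + b).val + m = a.val + b.val := by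
  rcases lt_or_ge (a.val + b.val) m with h | h
  · exact .inl (ZMod.val_add_of_lt h)
  · exact .inr (by rw [ZMod.val_add_val_of_le h, add_comm])

theorem ZMod.val_sub_natCast_eq_or {m : ℕ} [NeZero m] (a : ZMod m) {c : ℕ} (hc : c < m) :
    (a - (c : ZMod m)).val + c = a.val ∨ (a - (c : ZMod m)).val + c = a.val + m := by
  have h := ZMod.val_add_eq_or (a - (c : ZMod m)) c
  rw [sub_add_cancel, ZMod.val_cast_of_lt hc] at h
  omega

theorem cycleZ_adj {m : ℕ} {u v : ZMod m} :
    (cycleZ m).Adj u v ↔ u ≠ v ∧ (u - v = 1 ∨ v - u = 1) := by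
  simp [cycleZ, fromRel_adj]

theorem cycleZ_adj_add_one {m : ℕ} [Fact (1 < m)] (u : ZMod m) : (cycleZ m).Adj u (u + 1) :=
  cycleZ_adj.2 ⟨by simp, by simp⟩

theorem cycleZ_exists_walk_add {m : ℕ} [Fact (1 < m)] (u : ZMod m) (t : ℕ) :
    ∃ p : (cycleZ m).Walk u (u + t), p.length = t := by
  induction t with
  | zero => exact ⟨Walk.nil.copy rfl (by simp), by simp⟩
  | succ t ih =>
    obtain ⟨p, hp⟩ := ih
    exact ⟨(p.concat (cycleZ_adj_add_one _)).copy rfl (by push_cast; ring), by simp [hp]⟩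

theorem cycleZ_reachable {m : ℕ} [Fact (1 < m)] (u v : ZMod m) : (cycleZ m).Reachable u v := by
  obtain ⟨p, -⟩ := cycleZ_exists_walk_add u (v - u).val
  exact ⟨p.copy rfl (by simp)⟩

theorem circDist_val_le_add_one_of_adj {m : ℕ} [Fact (1 < m)] (x : ZMod m) {a b : ZMod m}
    (h : (cycleZ m).Adj a b) :
    circDist m (x - a).val ≤ circDist m (x - b).val + 1 := by
  have hva := ZMod.val_lt (x - a)
  have hvb := ZMod.val_lt (x - b)
  unfold circDist
  rcases (cycleZ_adj.1 h).2 with hab | hab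
  · have := ZMod.val_add_eq_or (x - a) 1
    rw [show x - a + 1 = x - b by linear_combination -hab, ZMod.val_one] at this
    omega
  · have := ZMod.val_add_eq_or (x - b) 1
    rw [show x - b + 1 = x - a by linear_combination -hab, ZMod.val_one] at this
    omega

theorem cycleZ_dist {m : ℕ} [Fact (1 < m)] (u v : ZMod m) :
    (cycleZ m).dist u v = circDist m (v - u).val := by
  have hlt := ZMod.val_lt (v - u)
  refine le_antisymm (le_min ?_ ?_) ?_
  · obtain ⟨p, hp⟩ := cycleZ_exists_walk_add u (v - u).val
    rw [← hp]
    exact (dist_le (p.copy rfl (by simp) : (cycleZ m).Walk u v)).trans_eq (by simp)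
  · obtain ⟨p, hp⟩ := cycleZ_exists_walk_add v (m - (v - u).val)
    have hu : v + ((m - (v - u).val : ℕ) : ZMod m) = u := by
      rw [Nat.cast_sub hlt.le, ZMod.natCast_self, ZMod.natCast_val, ZMod.cast_id', id]
      ring
    rw [← hp, SimpleGraph.dist_comm]
    exact (dist_le (p.copy rfl hu)).trans_eq (by simp)
  · obtain ⟨p, hp⟩ := (cycleZ_reachable u v).exists_walk_length_eq_dist
    have := p.le_add_length_of_le_add_one (fun z => circDist m (v - z).val)
      fun a b => circDist_val_le_add_one_of_adj v
    simpa [circDist, hp] using this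

theorem torus_dist {m n : ℕ} [Fact (1 < m)] [Fact (1 < n)] (w v : ZMod m × ZMod n) :
    (torus m n).dist w v = circDist m (v.1 - w.1).val + circDist n (v.2 - w.2).val := by
  have r₁ := cycleZ_reachable w.1 v.1
  have r₂ := cycleZ_reachable w.2 v.2
  have h := edist_boxProd (G := cycleZ m) (H := cycleZ n) w v
  rw [← r₁.coe_dist_eq_edist, ← r₂.coe_dist_eq_edist,
    ← (reachable_boxProd.2 ⟨r₁, r₂⟩).coe_dist_eq_edist] at h
  rw [torus, ← cycleZ_dist, ← cycleZ_dist]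
  exact_mod_cast h

theorem min_circDist_val_add_one {m : ℕ} [Fact (1 < m)] (x : ZMod m) :
    min (circDist m x.val) (circDist m (x + 1).val) = circDist (m - 1) x.val := by
  have := ZMod.val_add_eq_or x 1
  have := ZMod.val_lt x
  have := ZMod.val_lt (x + 1)
  rw [ZMod.val_one] at *
  unfold circDist
  omega

theorem edist_torus_cell {m n : ℕ} [Fact (1 < m)] [Fact (1 < n)] {δ₁ δ₂ : ℕ}
    (hδ : δ₁ + δ₂ ≤ 1) (w : ZMod m × ZMod n) (a : ZMod m) (b : ZMod n) :
    edist (torus m n) w s((a, b), (a + δ₁, b + δ₂)) =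
      circDist (m - δ₁) (a - w.1).val + circDist (n - δ₂) (b - w.2).val := by
  change min _ _ = _
  rw [torus_dist, torus_dist]
  obtain ⟨rfl, rfl⟩ | ⟨rfl, rfl⟩ | ⟨rfl, rfl⟩ :
      (δ₁ = 0 ∧ δ₂ = 0) ∨ (δ₁ = 1 ∧ δ₂ = 0) ∨ (δ₁ = 0 ∧ δ₂ = 1) := by omega
  · simp
  · simp only [Nat.cast_one, Nat.cast_zero, add_zero, Nat.sub_zero, add_sub_right_comm a,
      min_add_add_right, min_circDist_val_add_one]
  · simp only [Nat.cast_one, Nat.cast_zero, add_zero, Nat.sub_zero, add_sub_right_comm b,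
      min_add_add_left, min_circDist_val_add_one]

theorem torus_cell_cases {m n : ℕ} {x : Sym2 (ZMod m × ZMod n)}
    (hx : x ∈ Set.range Sym2.diag ∪ (torus m n).edgeSet) :
    ∃ δ₁ δ₂ : ℕ, δ₁ + δ₂ ≤ 1 ∧ ∃ (a : ZMod m) (b : ZMod n), x = s((a, b), (a + δ₁, b + δ₂)) := by
  rcases hx with ⟨v, rfl⟩ | hx
  · exact ⟨0, 0, zero_le_one, v.1, v.2, by simp [Sym2.diag]⟩
  induction x using Sym2.ind with
  | _ u v =>
  obtain ⟨u₁, u₂⟩ := u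
  obtain ⟨v₁, v₂⟩ := v
  rw [mem_edgeSet, torus, boxProd_adj, cycleZ_adj, cycleZ_adj] at hx
  dsimp only at hx
  rcases hx with ⟨⟨-, h | h⟩, rfl⟩ | ⟨⟨-, h | h⟩, rfl⟩ <;> obtain rfl := sub_eq_iff_eq_add'.1 h
  · exact ⟨1, 0, le_rfl, v₁, u₂, by simp [Sym2.eq_swap]⟩
  · exact ⟨1, 0, le_rfl, u₁, u₂, by simp⟩
  · exact ⟨0, 1, le_rfl, u₁, v₂, by simp [Sym2.eq_swap]⟩
  · exact ⟨0, 1, le_rfl, u₁, u₂, by simp⟩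

/-- The residues `t, t₁, t₂` of `a, a - 1, a - (k + 1)` modulo `2k + 1`: the first coordinate of
a point `(a, b)` seen from the first coordinates of the landmarks. -/
structure XOffsets (k : ℕ) where
  t : ℕ
  t₁ : ℕ
  t₂ : ℕ
  t_le : t ≤ 2 * k
  t₁_spec : t₁ + 1 = t ∨ (t = 0 ∧ t₁ = 2 * k)
  t₂_spec : t₂ + (k + 1) = t ∨ (t ≤ k ∧ t₂ = t + k)

/-- The residues `s, s₁, s₂` of `b, b - l, b - (l + 1)` modulo `2l + 1`. -/
structure YOffsets (l : ℕ) where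
  s : ℕ
  s₁ : ℕ
  s₂ : ℕ
  s_le : s ≤ 2 * l
  s₁_spec : s₁ + l = s ∨ (s < l ∧ s₁ = s + l + 1)
  s₂_spec : s₂ + (l + 1) = s ∨ (s ≤ l ∧ s₂ = s + l)

namespace XOffsets
variable {k : ℕ}

def ofZMod (hk : 1 ≤ k) (a : ZMod (2 * k + 1)) : XOffsets k where
  t := a.val
  t₁ := (a - 1).val
  t₂ := (a - ((k : ZMod (2 * k + 1)) + 1)).val
  t_le := Nat.le_of_lt_succ a.val_lt
  t₁_spec := by
    have h := ZMod.val_sub_natCast_eq_or a (c := 1) (by omega)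
    have := (a - 1).val_lt
    rw [Nat.cast_one] at h
    omega
  t₂_spec := by
    have h := ZMod.val_sub_natCast_eq_or a (c := k + 1) (by omega)
    have := (a - ((k : ZMod (2 * k + 1)) + 1)).val_lt
    push_cast at h
    omega

theorem ext_of_t_eq {x x' : XOffsets k} (h : x.t = x'.t) : x = x' := by
  cases x
  cases x'
  simp only [XOffsets.mk.injEq] at h ⊢
  omega

theorem t_eq_of_diff_eq {p : ℕ} (hk : 1 ≤ k) (hp : p = 2 * k ∨ p = 2 * k + 1)
    {x x' : XOffsets k}
    (h : circDist p x.t₁ + circDist p x'.t₂ = circDist p x.t₂ + circDist p x'.t₁) :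
    x.t = x'.t := by
  have := x.t_le; have := x'.t_le
  unfold circDist at h
  rcases x.t₁_spec with ht₁ | ht₁ <;> rcases x.t₂_spec with ht₂ | ht₂ <;>
    rcases x'.t₁_spec with ht₁' | ht₁' <;> rcases x'.t₂_spec with ht₂' | ht₂' <;> omega

theorem add_mem_of_diff_eq (hk : 1 ≤ k) {x x' : XOffsets k}
    (h : circDist (2 * k) x.t₁ + circDist (2 * k + 1) x'.t₂ =
      circDist (2 * k) x.t₂ + circDist (2 * k + 1) x'.t₁) :
    x.t + x'.t = 1 ∨ x.t + x'.t = 2 * k + 2 := by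
  have := x.t_le; have := x'.t_le
  unfold circDist at h
  rcases x.t₁_spec with ht₁ | ht₁ <;> rcases x.t₂_spec with ht₂ | ht₂ <;>
    rcases x'.t₁_spec with ht₁' | ht₁' <;> rcases x'.t₂_spec with ht₂' | ht₂' <;> omega

theorem vertex_edge_not_equidistant (hk : 1 ≤ k) {x x' : XOffsets k}
    (h : circDist (2 * k + 1) x.t = circDist (2 * k) x'.t)
    (h₁ : circDist (2 * k + 1) x.t₁ = circDist (2 * k) x'.t₁)
    (h₂ : circDist (2 * k + 1) x.t₂ = circDist (2 * k) x'.t₂) : False := by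
  have := x.t_le; have := x'.t_le
  unfold circDist at h h₁ h₂
  rcases x.t₁_spec with ht₁ | ht₁ <;> rcases x.t₂_spec with ht₂ | ht₂ <;>
    rcases x'.t₁_spec with ht₁' | ht₁' <;> rcases x'.t₂_spec with ht₂' | ht₂' <;> omega

end XOffsets

namespace YOffsets
variable {l : ℕ}

def ofZMod (hl : 1 ≤ l) (b : ZMod (2 * l + 1)) : YOffsets l where
  s := b.val
  s₁ := (b - l).val
  s₂ := (b - ((l : ZMod (2 * l + 1)) + 1)).val
  s_le := Nat.le_of_lt_succ b.val_lt
  s₁_spec := by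
    have h := ZMod.val_sub_natCast_eq_or b (c := l) (by omega)
    have := (b - l).val_lt
    omega
  s₂_spec := by
    have h := ZMod.val_sub_natCast_eq_or b (c := l + 1) (by omega)
    have := (b - ((l : ZMod (2 * l + 1)) + 1)).val_lt
    push_cast at h
    omega

theorem ext_of_s_eq {y y' : YOffsets l} (h : y.s = y'.s) : y = y' := by
  cases y
  cases y'
  simp only [YOffsets.mk.injEq] at h ⊢
  omega

theorem s_eq_of_diff_eq {q : ℕ} (hl : 1 ≤ l) (hq : q = 2 * l ∨ q = 2 * l + 1)
    {y y' : YOffsets l}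
    (h : circDist q y.s + circDist q y'.s₁ = circDist q y.s₁ + circDist q y'.s) :
    y.s = y'.s := by
  have := y.s_le; have := y'.s_le; have := y.s₁_spec; have := y'.s₁_spec
  unfold circDist at h
  omega

theorem add_eq_of_diff_eq (hl : 1 ≤ l) {y y' : YOffsets l}
    (h : circDist (2 * l + 1) y.s + circDist (2 * l) y'.s₁ =
      circDist (2 * l + 1) y.s₁ + circDist (2 * l) y'.s) :
    y.s + y'.s = 2 * l := by
  have := y.s_le; have := y'.s_le; have := y.s₁_spec; have := y'.s₁_spec
  unfold circDist at h
  omega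

theorem vertex_edge_not_equidistant (hl : 1 ≤ l) {y y' : YOffsets l}
    (h : circDist (2 * l + 1) y.s = circDist (2 * l) y'.s)
    (h₁ : circDist (2 * l + 1) y.s₁ = circDist (2 * l) y'.s₁)
    (h₂ : circDist (2 * l + 1) y.s₂ = circDist (2 * l) y'.s₂) : False := by
  have := y.s_le; have := y'.s_le
  unfold circDist at h h₁ h₂
  rcases y.s₁_spec with hs₁ | hs₁ <;> rcases y.s₂_spec with hs₂ | hs₂ <;>
    rcases y'.s₁_spec with hs₁' | hs₁' <;> rcases y'.s₂_spec with hs₂' | hs₂' <;> omega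

end YOffsets

theorem horizontal_vertical_not_equidistant {k l : ℕ} (hl : 1 ≤ l)
    {x x' : XOffsets k} {y y' : YOffsets l}
    (hx : x.t + x'.t = 1 ∨ x.t + x'.t = 2 * k + 2) (hy : y.s + y'.s = 2 * l)
    (h : circDist (2 * k) x.t + circDist (2 * l + 1) y.s =
      circDist (2 * k + 1) x'.t + circDist (2 * l) y'.s)
    (h₂ : circDist (2 * k) x.t₁ + circDist (2 * l + 1) y.s₂ =
      circDist (2 * k + 1) x'.t₁ + circDist (2 * l) y'.s₂) : False := by
  have := x.t_le; have := x'.t_le; have := y.s_le; have := y'.s_le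
  unfold circDist at h h₂
  rcases x.t₁_spec with ht₁ | ht₁ <;> rcases x'.t₁_spec with ht₁' | ht₁' <;>
    rcases y.s₂_spec with hs₂ | hs₂ <;> rcases y'.s₂_spec with hs₂' | hs₂' <;>
    rcases hx with hx | hx <;> omega

section Profile
variable {k l : ℕ}

/-- The distances from the landmarks `(0, 0), (0, l), (1, l + 1), (k + 1, l + 1)` to an element
based at a point with offsets `x, y`; `p, q` are `2k + 1, 2l + 1`, less one along an edge. -/
def profile (p q : ℕ) (x : XOffsets k) (y : YOffsets l) : ℕ × ℕ × ℕ × ℕ :=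
  (circDist p x.t + circDist q y.s, circDist p x.t + circDist q y.s₁,
    circDist p x.t₁ + circDist q y.s₂, circDist p x.t₂ + circDist q y.s₂)

theorem profile_injective (hk : 1 ≤ k) (hl : 1 ≤ l) {p q : ℕ}
    (hp : p = 2 * k ∨ p = 2 * k + 1) (hq : q = 2 * l ∨ q = 2 * l + 1)
    {x x' : XOffsets k} {y y' : YOffsets l} (h : profile p q x y = profile p q x' y') :
    x = x' ∧ y = y' := by
  simp only [profile, Prod.mk.injEq] at h
  obtain ⟨h₀, h₁, h₂, h₃⟩ := h
  exact ⟨XOffsets.ext_of_t_eq (XOffsets.t_eq_of_diff_eq hk hp (by omega)),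
    YOffsets.ext_of_s_eq (YOffsets.s_eq_of_diff_eq hl hq (by omega))⟩

theorem profile_vertex_ne_horizontal (hk : 1 ≤ k) (hl : 1 ≤ l) (x x' : XOffsets k)
    (y y' : YOffsets l) :
    profile (2 * k + 1) (2 * l + 1) x y ≠ profile (2 * k) (2 * l + 1) x' y' := by
  intro h
  simp only [profile, Prod.mk.injEq] at h
  obtain ⟨h₀, h₁, h₂, h₃⟩ := h
  have hs : y.s = y'.s := YOffsets.s_eq_of_diff_eq hl (.inr rfl) (by omega)
  obtain rfl := YOffsets.ext_of_s_eq hs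
  exact XOffsets.vertex_edge_not_equidistant (x := x) (x' := x') hk (by omega) (by omega)
    (by omega)

theorem profile_vertex_ne_vertical (hk : 1 ≤ k) (hl : 1 ≤ l) (x x' : XOffsets k)
    (y y' : YOffsets l) :
    profile (2 * k + 1) (2 * l + 1) x y ≠ profile (2 * k + 1) (2 * l) x' y' := by
  intro h
  simp only [profile, Prod.mk.injEq] at h
  obtain ⟨h₀, h₁, h₂, h₃⟩ := h
  have ht : x.t = x'.t := XOffsets.t_eq_of_diff_eq hk (.inr rfl) (by omega)
  obtain rfl := XOffsets.ext_of_t_eq ht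
  exact YOffsets.vertex_edge_not_equidistant (y := y) (y' := y') hl (by omega) (by omega)
    (by omega)

theorem profile_horizontal_ne_vertical (hk : 1 ≤ k) (hl : 1 ≤ l) (x x' : XOffsets k)
    (y y' : YOffsets l) :
    profile (2 * k) (2 * l + 1) x y ≠ profile (2 * k + 1) (2 * l) x' y' := by
  intro h
  simp only [profile, Prod.mk.injEq] at h
  obtain ⟨h₀, h₁, h₂, h₃⟩ := h
  exact horizontal_vertical_not_equidistant hl (XOffsets.add_mem_of_diff_eq hk (by omega))
    (YOffsets.add_eq_of_diff_eq hl (by omega)) h₀ h₂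

theorem profile_cell_injective (hk : 1 ≤ k) (hl : 1 ≤ l) {δ₁ δ₂ δ₁' δ₂' : ℕ}
    (hδ : δ₁ + δ₂ ≤ 1) (hδ' : δ₁' + δ₂' ≤ 1) {x x' : XOffsets k} {y y' : YOffsets l}
    (h : profile (2 * k + 1 - δ₁) (2 * l + 1 - δ₂) x y =
      profile (2 * k + 1 - δ₁') (2 * l + 1 - δ₂') x' y') :
    δ₁ = δ₁' ∧ δ₂ = δ₂' ∧ x = x' ∧ y = y' := by
  have cases (d₁ d₂ : ℕ) (hd : d₁ + d₂ ≤ 1) :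
      (d₁ = 0 ∧ d₂ = 0) ∨ (d₁ = 1 ∧ d₂ = 0) ∨ (d₁ = 0 ∧ d₂ = 1) := by omega
  obtain ⟨rfl, rfl⟩ | ⟨rfl, rfl⟩ | ⟨rfl, rfl⟩ := cases _ _ hδ <;>
    obtain ⟨rfl, rfl⟩ | ⟨rfl, rfl⟩ | ⟨rfl, rfl⟩ := cases _ _ hδ' <;>
    simp only [Nat.sub_zero, Nat.add_sub_cancel] at h
  all_goals first
    | exact ⟨rfl, rfl, profile_injective hk hl (by omega) (by omega) h⟩
    | exact absurd h (profile_vertex_ne_horizontal hk hl _ _ _ _)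
    | exact absurd h.symm (profile_vertex_ne_horizontal hk hl _ _ _ _)
    | exact absurd h (profile_vertex_ne_vertical hk hl _ _ _ _)
    | exact absurd h.symm (profile_vertex_ne_vertical hk hl _ _ _ _)
    | exact absurd h (profile_horizontal_ne_vertical hk hl _ _ _ _)
    | exact absurd h.symm (profile_horizontal_ne_vertical hk hl _ _ _ _)

end Profile

theorem landmark_edist_eq_profile {k l : ℕ} (hk : 1 ≤ k) (hl : 1 ≤ l) {δ₁ δ₂ : ℕ}
    (hδ : δ₁ + δ₂ ≤ 1) (a : ZMod (2 * k + 1)) (b : ZMod (2 * l + 1)) :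
    (edist (torus (2 * k + 1) (2 * l + 1)) (0, 0) s((a, b), (a + δ₁, b + δ₂)),
      edist (torus (2 * k + 1) (2 * l + 1)) (0, l) s((a, b), (a + δ₁, b + δ₂)),
      edist (torus (2 * k + 1) (2 * l + 1)) (1, l + 1) s((a, b), (a + δ₁, b + δ₂)),
      edist (torus (2 * k + 1) (2 * l + 1)) (k + 1, l + 1) s((a, b), (a + δ₁, b + δ₂))) =
      profile (2 * k + 1 - δ₁) (2 * l + 1 - δ₂) (XOffsets.ofZMod hk a)
        (YOffsets.ofZMod hl b) := by
  have : Fact (1 < 2 * k + 1) := ⟨by omega⟩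
  have : Fact (1 < 2 * l + 1) := ⟨by omega⟩
  simp only [edist_torus_cell hδ, sub_zero]
  rfl

theorem stmt_9 (k l : Nat) (hk : 1 ≤ k) (hl : 1 ≤ l) :
    MixedResolvingSet (torus (2 * k + 1) (2 * l + 1))
      {((0 : ZMod (2 * k + 1)), (0 : ZMod (2 * l + 1))), (0, (l : ZMod (2 * l + 1))),
        (1, ((l : ZMod (2 * l + 1)) + 1)),
        (((k : ZMod (2 * k + 1)) + 1), ((l : ZMod (2 * l + 1)) + 1))} ∧
    mixedDim (torus (2 * k + 1) (2 * l + 1)) ≤ 4 := by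
  suffices hS : MixedResolvingSet _ _ from ⟨hS, (mixedDim_le_ncard hS).trans <| by
    classical
    simpa using (Set.ncard_coe_finset ({_, _, _, _} : Finset _)).trans_le Finset.card_le_four⟩
  refine mixedResolvingSet_of_edist_injOn _ _ fun x hx y hy hxy => ?_
  obtain ⟨δ₁, δ₂, hδ, a, b, rfl⟩ := torus_cell_cases hx
  obtain ⟨δ₁', δ₂', hδ', a', b', rfl⟩ := torus_cell_cases hy
  have h := landmark_edist_eq_profile hk hl hδ a b
  rw [hxy _ (by simp), hxy _ (by simp), hxy _ (by simp), hxy _ (by simp),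
    landmark_edist_eq_profile hk hl hδ' a' b'] at h
  obtain ⟨rfl, rfl, ha, hb⟩ := profile_cell_injective hk hl hδ hδ' h.symm
  obtain rfl : a = a' := ZMod.val_injective _ (congrArg XOffsets.t ha)
  obtain rfl : b = b' := ZMod.val_injective _ (congrArg YOffsets.s hb)
  rfl
end
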